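/- arXiv:2411.06640 — 4 statements merged into one kernel-verified Lean document; each statement's English description precedes it below -/
import Mathlib

section
/- If X_1,…,X_n are independent random variables with a_i ≤ X_i ≤ b_i almost surely, and X̄_n = (X_1+⋯+X_n)/n, then for every ε > 0, P(|X̄_n − E[X̄_n]| ≥ ε) ≤ 2 exp(−2n²ε² / Σ_{i=1}^n (b_i−a_i)²). -/
open MeasureTheory ProbabilityTheory Filter Set

/-!
By Hoeffding's lemma each centred variable `X i - E[X i]` is sub-Gaussian with variance proxy
`(b i - a i)² / 4`, and by independence the proxies add up along the sum. The Chernoff bound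
applied to the sum and to its negation then controls both tails of the sum, and the deviation
`ε` of the empirical mean is a deviation `n ε` of the sum.
-/

open Real NNReal

namespace ProbabilityTheory

variable {Ω : Type*} [MeasurableSpace Ω] {μ : Measure Ω}

lemma HasSubgaussianMGF.measureReal_abs_ge_le {X : Ω → ℝ} {c : ℝ≥0}
    (h : HasSubgaussianMGF X c μ) {ε : ℝ} (hε : 0 ≤ ε) :
    μ.real {ω | ε ≤ |X ω|} ≤ 2 * exp (-ε ^ 2 / (2 * c)) := by
  have hsplit : {ω | ε ≤ |X ω|} = {ω | ε ≤ X ω} ∪ {ω | ε ≤ (-X) ω} := by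
    ext ω
    simp [le_abs]
  calc μ.real {ω | ε ≤ |X ω|}
      ≤ μ.real {ω | ε ≤ X ω} + μ.real {ω | ε ≤ (-X) ω} := hsplit ▸ measureReal_union_le _ _
    _ ≤ exp (-ε ^ 2 / (2 * c)) + exp (-ε ^ 2 / (2 * c)) :=
      add_le_add (h.measure_ge_le hε) (h.neg.measure_ge_le hε)
    _ = 2 * exp (-ε ^ 2 / (2 * c)) := by ring

lemma hasSubgaussianMGF_sum_sub_integral_of_mem_Icc [IsProbabilityMeasure μ] {ι : Type*}
    {X : ι → Ω → ℝ} {a b : ι → ℝ} (hindep : iIndepFun X μ) (hm : ∀ i, AEMeasurable (X i) μ)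
    (hb : ∀ i, ∀ᵐ ω ∂μ, X i ω ∈ Icc (a i) (b i)) (s : Finset ι) :
    HasSubgaussianMGF (fun ω ↦ ∑ i ∈ s, (X i ω - μ[X i]))
      (∑ i ∈ s, (‖b i - a i‖₊ / 2) ^ 2) μ := by
  have hcentred := hindep.comp (fun i (y : ℝ) ↦ y - μ[X i]) fun _ ↦ measurable_id.sub_const _
  exact HasSubgaussianMGF.sum_of_iIndepFun hcentred fun i _ ↦
    hasSubgaussianMGF_of_mem_Icc (hm i) (hb i)

theorem measureReal_abs_sum_sub_integral_ge_le [IsProbabilityMeasure μ] {ι : Type*}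
    {X : ι → Ω → ℝ} {a b : ι → ℝ} (hindep : iIndepFun X μ) (hm : ∀ i, AEMeasurable (X i) μ)
    (hb : ∀ i, ∀ᵐ ω ∂μ, X i ω ∈ Icc (a i) (b i)) (s : Finset ι) {ε : ℝ} (hε : 0 ≤ ε) :
    μ.real {ω | ε ≤ |∑ i ∈ s, (X i ω - μ[X i])|} ≤
      2 * exp (-(2 * ε ^ 2) / ∑ i ∈ s, (b i - a i) ^ 2) := by
  have hproxy : 2 * ((∑ i ∈ s, (‖b i - a i‖₊ / 2) ^ 2 : ℝ≥0) : ℝ) =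
      (∑ i ∈ s, (b i - a i) ^ 2) / 2 := by
    push_cast
    rw [Finset.mul_sum, Finset.sum_div]
    refine Finset.sum_congr rfl fun i _ ↦ ?_
    rw [Real.norm_eq_abs, div_pow, sq_abs]
    ring
  refine ((hasSubgaussianMGF_sum_sub_integral_of_mem_Icc hindep hm hb s).measureReal_abs_ge_le
    hε).trans_eq ?_
  rw [hproxy, div_div_eq_mul_div]
  ring_nf

end ProbabilityTheory

theorem stmt4_general {Ω : Type*} [MeasurableSpace Ω] (μ : Measure Ω) [IsProbabilityMeasure μ]
    (n : ℕ) (X : Fin n → Ω → ℝ) (a b : Fin n → ℝ)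
    (hmeas : ∀ i, Measurable (X i))
    (hindep : iIndepFun X μ)
    (hbound : ∀ i, ∀ᵐ ω ∂μ, X i ω ∈ Icc (a i) (b i))
    (ε : ℝ) (hε : 0 < ε) :
    (μ {ω | ε ≤ |(∑ i, X i ω) / n - μ[fun ω => (∑ i, X i ω) / n]|}).toReal ≤
      2 * Real.exp (-(2 * n ^ 2 * ε ^ 2) / ∑ i, (b i - a i) ^ 2) := by
  have hint : ∀ i, Integrable (X i) μ := fun i ↦
    Integrable.of_mem_Icc (a i) (b i) (hmeas i).aemeasurable (hbound i)
  have hdev : ∀ ω, (∑ i, X i ω) / n - μ[fun ω => (∑ i, X i ω) / n] =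
      (∑ i, (X i ω - μ[X i])) / n := fun ω ↦ by
    rw [integral_div, integral_finsetSum _ fun i _ ↦ hint i, Finset.sum_sub_distrib,
      div_sub_div_same]
  have hevent : {ω | ε ≤ |(∑ i, X i ω) / n - μ[fun ω => (∑ i, X i ω) / n]|} ⊆
      {ω | n * ε ≤ |∑ i, (X i ω - μ[X i])|} := fun ω hω ↦ by
    rw [mem_ofPred_eq, hdev, abs_div, Nat.abs_cast] at hω
    rw [mem_ofPred_eq, mul_comm]
    exact mul_le_of_le_div₀ (abs_nonneg _) n.cast_nonneg hω
  calc μ.real _ ≤ μ.real {ω | n * ε ≤ |∑ i, (X i ω - μ[X i])|} := measureReal_mono hevent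
    _ ≤ 2 * exp (-(2 * (n * ε) ^ 2) / ∑ i, (b i - a i) ^ 2) :=
      measureReal_abs_sum_sub_integral_ge_le hindep (fun i ↦ (hmeas i).aemeasurable)
        hbound _ (by positivity)
    _ = _ := by ring_nf

/-- Hoeffding's inequality: if `X 1, …, X n` are independent with
`a i ≤ X i ≤ b i` a.s., then for every `ε > 0`,
`P(|X̄ - E X̄| ≥ ε) ≤ 2 exp (-2 n² ε² / ∑ (b i - a i)²)`. -/
theorem stmt4 {Ω : Type*} [MeasurableSpace Ω] (μ : Measure Ω) [IsProbabilityMeasure μ]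
    (n : ℕ) (hn : 0 < n) (X : Fin n → Ω → ℝ) (a b : Fin n → ℝ)
    (hmeas : ∀ i, Measurable (X i))
    (hindep : iIndepFun X μ)
    (hbound : ∀ i, ∀ᵐ ω ∂μ, X i ω ∈ Icc (a i) (b i))
    (ε : ℝ) (hε : 0 < ε) :
    (μ {ω | ε ≤ |(∑ i, X i ω) / n - μ[fun ω => (∑ i, X i ω) / n]|}).toReal ≤
      2 * Real.exp (-(2 * n ^ 2 * ε ^ 2) / ∑ i, (b i - a i) ^ 2) :=
  stmt4_general μ n X a b hmeas hindep hbound ε hε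
end

section
/- Fix c > 0, b ∈ (0,c) and define g(α) = (log(c/(c−b)))^{−1/α} / Γ(1−1/α) for α > 1, where Γ is the Gamma function. If log(c/(c−b)) ≥ exp(−γ), where γ is the Euler–Mascheroni constant, then g is increasing in α on (1,∞). -/
/-!
With `L = log (c/(c-b))` and `s = 1 - 1/α ∈ (0, 1)`, the function is `L ^ s / Γ(s) / L`, so it
suffices that `s ↦ L ^ s / Γ(s)` increases on `(0, 1]`, i.e. that
`log Γ(t) - log Γ(s) ≤ (t - s) log L` for `s ≤ t ≤ 1`. Since `log ∘ Γ` is convex, its secant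
slopes left of `1` are bounded by its derivative at `1`, which is `Γ'(1) = -γ ≤ log L`.
-/

open Set

namespace Real

lemma slope_log_Gamma_le_neg_eulerMascheroniConstant {s t : ℝ} (hs : 0 < s) (hst : s < t)
    (ht : t ≤ 1) : slope (log ∘ Gamma) s t ≤ -eulerMascheroniConstant := by
  have hconv : ConvexOn ℝ (Ioi 0) (log ∘ Gamma) := convexOn_log_Gamma
  have hderiv : HasDerivAt (log ∘ Gamma) (-eulerMascheroniConstant) 1 := by
    simpa [Function.comp_def, Gamma_one] using hasDerivAt_Gamma_one.log (by simp [Gamma_one])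
  calc slope (log ∘ Gamma) s t
      ≤ slope (log ∘ Gamma) s 1 := hconv.monotoneOn_slope_gt hs ⟨mem_Ioi.mpr (hs.trans hst), hst⟩
          ⟨mem_Ioi.mpr one_pos, hst.trans_le ht⟩ ht
    _ ≤ -eulerMascheroniConstant :=
        hconv.slope_le_of_hasDerivAt hs (mem_Ioi.mpr one_pos) (hst.trans_le ht) hderiv

lemma Gamma_le_Gamma_mul_exp {s t : ℝ} (hs : 0 < s) (hst : s ≤ t) (ht : t ≤ 1) :
    Gamma t ≤ Gamma s * exp (-eulerMascheroniConstant * (t - s)) := by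
  rcases hst.eq_or_lt with rfl | hst
  · simp
  have hslope := slope_log_Gamma_le_neg_eulerMascheroniConstant hs hst ht
  rw [slope_def_field, div_le_iff₀ (sub_pos.mpr hst), Function.comp_apply,
    Function.comp_apply] at hslope
  calc Gamma t = exp (log (Gamma s) + (log (Gamma t) - log (Gamma s))) := by
        rw [add_sub_cancel, exp_log (Gamma_pos_of_pos (hs.trans hst))]
    _ ≤ exp (log (Gamma s) + -eulerMascheroniConstant * (t - s)) := by gcongr
    _ = Gamma s * exp (-eulerMascheroniConstant * (t - s)) := by
        rw [exp_add, exp_log (Gamma_pos_of_pos hs)]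

lemma monotoneOn_rpow_div_Gamma {L : ℝ} (hL : exp (-eulerMascheroniConstant) ≤ L) :
    MonotoneOn (fun s => L ^ s / Gamma s) (Ioc 0 1) := by
  rintro s ⟨hs, -⟩ t ⟨ht0, ht⟩ hst
  have hL0 : 0 < L := (exp_pos _).trans_le hL
  rw [div_le_div_iff₀ (Gamma_pos_of_pos hs) (Gamma_pos_of_pos ht0)]
  calc L ^ s * Gamma t ≤ L ^ s * (Gamma s * exp (-eulerMascheroniConstant) ^ (t - s)) := by
        rw [← exp_mul]
        exact mul_le_mul_of_nonneg_left (Gamma_le_Gamma_mul_exp hs hst ht) (by positivity)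
    _ ≤ L ^ s * (Gamma s * L ^ (t - s)) := by gcongr
    _ = L ^ t * Gamma s := by
        rw [mul_left_comm, ← rpow_add hL0, add_sub_cancel, mul_comm]

end Real

theorem stmt10_general (c b : ℝ)
    (h : Real.exp (-Real.eulerMascheroniConstant) ≤ Real.log (c / (c - b))) :
    MonotoneOn (fun α : ℝ => (Real.log (c / (c - b))) ^ (-(1 / α)) / Real.Gamma (1 - 1 / α))
      (Ioi 1) := by
  set L := Real.log (c / (c - b))
  have hL : 0 < L := (Real.exp_pos _).trans_le h
  have hmaps : MapsTo (fun α : ℝ => 1 - 1 / α) (Ioi 1) (Ioc 0 1) := fun α (hα : 1 < α) =>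
    ⟨by rw [sub_pos, div_lt_one (by linarith)]; exact hα, sub_le_self _ (by positivity)⟩
  have hmono : MonotoneOn (fun α : ℝ => 1 - 1 / α) (Ioi 1) := fun α (hα : 1 < α) β _ hαβ => by
    dsimp only; gcongr
  have hrewrite (α : ℝ) :
      L ^ (-(1 / α)) / Real.Gamma (1 - 1 / α) = L ^ (1 - 1 / α) / Real.Gamma (1 - 1 / α) / L := by
    rw [div_right_comm, ← Real.rpow_sub_one hL.ne', sub_sub_cancel_left]
  intro α hα β hβ hαβ
  simp only [hrewrite]
  gcongr ?_ / L
  exact Real.monotoneOn_rpow_div_Gamma h (hmaps hα) (hmaps hβ) (hmono hα hβ hαβ)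

/-- `g(α) = (log (c/(c-b)))^{-1/α} / Γ(1 - 1/α)` is increasing in `α` on
`(1, ∞)` provided `log (c/(c-b)) ≥ exp (-γ)`, `γ` the Euler–Mascheroni constant. -/
theorem stmt10 (c b : ℝ) (hc : 0 < c) (hb : b ∈ Ioo 0 c)
    (h : Real.exp (-Real.eulerMascheroniConstant) ≤ Real.log (c / (c - b))) :
    MonotoneOn (fun α : ℝ => (Real.log (c / (c - b))) ^ (-(1 / α)) / Real.Gamma (1 - 1 / α))
      (Ioi 1) :=
  stmt10_general c b h
end

section
/- Let V be a positive random variable and R_1,…,R_n i.i.d. standard exponential random variables independent of V. Let φ^{−1}(s) = E[e^{−sV}] be the Laplace–Stieltjes transform of V, with inverse φ. Define U_i = φ^{−1}(R_i/V). Then the random vector (U_1,…,U_n) has the Archimedean copula C(u_1,…,u_n) = φ^{−1}(φ(u_1)+⋯+φ(u_n)) as its joint distribution function, and each U_i is uniformly distributed on [0,1]. -/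
/-!
Conditionally on `V = v`, the events `{c i * v ≤ R i}` are independent with probabilities
`exp (-(c i * v))`, so `P(∀ i, c i * V ≤ R i) = E[exp (-(∑ i, c i) * V)] = φ⁻¹(∑ i, c i)`.
As `V > 0`, the Laplace transform `φ⁻¹` is strictly decreasing on `[0, ∞)`, so the event
`φ⁻¹(R i / V) ≤ u i` is `φ (u i) * V ≤ R i`. Taking `c = φ ∘ u` gives the copula, and taking
`c` supported on a single index gives the uniform marginals.
-/

open MeasureTheory ProbabilityTheory Set

section Exponential

variable {r : ℝ}

lemma expMeasure_Ici {t : ℝ} (hr : 0 < r) (ht : 0 ≤ t) :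
    expMeasure r (Ici t) = ENNReal.ofReal (Real.exp (-(r * t))) := by
  have := isProbabilityMeasure_expMeasure hr
  have hIio : expMeasure r (Iio t) = expMeasure r (Iic t) :=
    measure_congr (Iio_ae_eq_Iic' (withDensity_absolutelyContinuous _ _ Real.volume_singleton))
  have hexp_le : Real.exp (-(r * t)) ≤ 1 := Real.exp_le_one_iff.2 (by nlinarith)
  rw [← compl_Iio, prob_compl_eq_one_sub measurableSet_Iio, hIio, ← ofReal_cdf,
    cdf_expMeasure_eq hr, if_pos ht, ← ENNReal.ofReal_one,
    ← ENNReal.ofReal_sub _ (sub_nonneg.2 hexp_le), sub_sub_cancel]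

lemma ae_nonneg_expMeasure (hr : 0 < r) : ∀ᵐ x ∂expMeasure r, 0 ≤ x := by
  have := isProbabilityMeasure_expMeasure hr
  have hIic : expMeasure r (Iic 0) = 0 := by
    rw [← ofReal_cdf, cdf_expMeasure_eq hr]
    simp
  exact ae_iff.2 (measure_mono_null (fun x hx ↦ (not_le.1 hx).le) hIic)

end Exponential

section Laplace

variable {Ω : Type*} [MeasurableSpace Ω] {μ : Measure Ω}

lemma integrable_exp_mul_of_nonpos_of_nonneg [IsFiniteMeasure μ] {X : Ω → ℝ} {t : ℝ} (ht : t ≤ 0)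
    (hX : AEMeasurable X μ) (hX₀ : ∀ᵐ ω ∂μ, 0 ≤ X ω) :
    Integrable (fun ω ↦ Real.exp (t * X ω)) μ := by
  refine .of_mem_Icc 0 1 (Real.measurable_exp.comp_aemeasurable (hX.const_mul t)) ?_
  filter_upwards [hX₀] with ω hω
  exact ⟨(Real.exp_pos _).le, Real.exp_le_one_iff.2 (mul_nonpos_of_nonpos_of_nonneg ht hω)⟩

lemma mgf_strictMonoOn_Iic [IsFiniteMeasure μ] [NeZero μ] {X : Ω → ℝ} (hX : AEMeasurable X μ)
    (hX₀ : ∀ᵐ ω ∂μ, 0 < X ω) : StrictMonoOn (mgf X μ) (Iic 0) := by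
  intro s hs t ht hst
  have hint : ∀ u ∈ Iic (0 : ℝ), Integrable (fun ω ↦ Real.exp (u * X ω)) μ :=
    fun u hu ↦ integrable_exp_mul_of_nonpos_of_nonneg hu hX (hX₀.mono fun _ h ↦ h.le)
  have hlt : ∀ᵐ ω ∂μ, Real.exp (s * X ω) < Real.exp (t * X ω) := by
    filter_upwards [hX₀] with ω hω
    exact Real.exp_lt_exp.2 (mul_lt_mul_of_pos_right hst hω)
  refine lt_of_le_of_ne (integral_mono_ae (hint s hs) (hint t ht) (hlt.mono fun _ h ↦ h.le))
    fun heq ↦ ?_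
  have hae := (integral_eq_iff_of_ae_le (hint s hs) (hint t ht) (hlt.mono fun _ h ↦ h.le)).1 heq
  obtain ⟨ω, hω, hω'⟩ := (hae.and hlt).exists
  exact hω'.ne hω

lemma ProbabilityTheory.iIndepFun.map_prod_eq_pi_prod {ι β : Type*} [Fintype ι] [MeasurableSpace β]
    {V : Ω → β} {R : ι → Ω → β} (hV : AEMeasurable V μ) (hR : ∀ i, AEMeasurable (R i) μ)
    (h : iIndepFun (fun o : Option ι ↦ Option.elim o V R) μ) :
    μ.map (fun ω ↦ ((fun i ↦ R i ω), V ω)) = (Measure.pi fun i ↦ μ.map (R i)).prod (μ.map V) := by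
  have := h.isProbabilityMeasure
  let e := MeasurableEquiv.piOptionEquivProd fun _ : Option ι ↦ β
  have hF : ∀ o, AEMeasurable (Option.elim o V R) μ := fun o ↦ o.rec hV hR
  calc μ.map (fun ω ↦ ((fun i ↦ R i ω), V ω))
      = (μ.map fun ω o ↦ Option.elim o V R ω).map e :=
        (AEMeasurable.map_map_of_aemeasurable e.measurable.aemeasurable
          (aemeasurable_pi_lambda _ hF)).symm
    _ = (Measure.pi fun o ↦ μ.map (Option.elim o V R)).map e := by
        rw [h.map_fun_eq_pi_map hF]
    _ = _ := by
        rw [← Measure.pi_map_piOptionEquivProd, MeasurableEquiv.map_map_symm]; rfl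

lemma measure_forall_mul_le_eq_mgf {ι : Type*} [Fintype ι] {V : Ω → ℝ} {R : ι → Ω → ℝ}
    (hV : AEMeasurable V μ) (hR : ∀ i, AEMeasurable (R i) μ) (hV₀ : ∀ᵐ ω ∂μ, 0 ≤ V ω)
    (h : iIndepFun (fun o : Option ι ↦ Option.elim o V R) μ) {r : ℝ} (hr : 0 < r)
    (hexp : ∀ i, μ.map (R i) = expMeasure r) {c : ι → ℝ} (hc : 0 ≤ c) :
    μ {ω | ∀ i, c i * V ω ≤ R i ω} = ENNReal.ofReal (mgf V μ (-(r * ∑ i, c i))) := by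
  have := h.isProbabilityMeasure
  have := isProbabilityMeasure_expMeasure hr
  set B : Set ((ι → ℝ) × ℝ) := {p | ∀ i, c i * p.2 ≤ p.1 i}
  have hB : MeasurableSet B := by
    simp only [B, ofPred_forall]
    exact .iInter fun i ↦ measurableSet_le (by fun_prop) (by fun_prop)
  have hsection : ∀ v, 0 ≤ v → (Measure.pi fun _ : ι ↦ expMeasure r) ((fun x ↦ (x, v)) ⁻¹' B)
      = ENNReal.ofReal (Real.exp (-(r * ∑ i, c i) * v)) := by
    intro v hv
    have : ((fun x ↦ (x, v)) ⁻¹' B) = univ.pi fun i ↦ Ici (c i * v) := by ext; simp [B, Pi.le_def]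
    rw [this, Measure.pi_pi,
      Finset.prod_congr rfl fun i _ ↦ expMeasure_Ici hr (mul_nonneg (hc i) hv),
      ← ENNReal.ofReal_prod_of_nonneg fun _ _ ↦ (Real.exp_pos _).le, ← Real.exp_sum]
    simp only [Finset.sum_neg_distrib, Finset.mul_sum, Finset.sum_mul, neg_mul, mul_assoc]
  calc μ {ω | ∀ i, c i * V ω ≤ R i ω}
      = μ.map (fun ω ↦ ((fun i ↦ R i ω), V ω)) B :=
        (Measure.map_apply_of_aemeasurable ((aemeasurable_pi_lambda _ hR).prodMk hV) hB).symm
    _ = ∫⁻ v, (Measure.pi fun _ : ι ↦ expMeasure r) ((fun x ↦ (x, v)) ⁻¹' B) ∂μ.map V := by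
        rw [h.map_prod_eq_pi_prod hV hR, funext hexp, Measure.prod_apply_symm hB]
    _ = ∫⁻ v, ENNReal.ofReal (Real.exp (-(r * ∑ i, c i) * v)) ∂μ.map V := by
        refine lintegral_congr_ae ?_
        filter_upwards [ae_map_iff hV measurableSet_Ici |>.2 hV₀] with v hv
        exact hsection v hv
    _ = ENNReal.ofReal (mgf V μ (-(r * ∑ i, c i))) := by
        rw [lintegral_map' (by fun_prop) hV, mgf, ofReal_integral_eq_lintegral_ofReal
          (integrable_exp_mul_of_nonpos_of_nonneg ?_ hV hV₀)
          (.of_forall fun _ ↦ (Real.exp_pos _).le)]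
        exact neg_nonpos.2 (mul_nonneg hr.le (Finset.sum_nonneg fun i _ ↦ hc i))

end Laplace

lemma forall_pi_single_mul_le_iff {ι : Type*} [DecidableEq ι] {i : ι} {a v : ℝ} {x : ι → ℝ}
    (hx : 0 ≤ x) : (∀ j, (Pi.single i a : ι → ℝ) j * v ≤ x j) ↔ a * v ≤ x i := by
  refine ⟨fun h ↦ by simpa using h i, fun h j ↦ ?_⟩
  rcases eq_or_ne j i with rfl | hj
  · simpa using h
  · simpa [hj] using hx j

/-- Marshall–Olkin representation: if `V > 0` has Laplace–Stieltjes
transform `φ⁻¹`, `R 1, …, R n` are i.i.d. standard exponentials independent of `V`, and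
`U i = φ⁻¹(R i / V)`, then `(U 1, …, U n)` has joint distribution function the Archimedean
copula `φ⁻¹(φ u₁ + ⋯ + φ uₙ)`, and each `U i` is uniform on `[0,1]`. -/
theorem stmt11 {Ω : Type*} [MeasurableSpace Ω] (μ : Measure Ω) [IsProbabilityMeasure μ]
    (n : ℕ) (V : Ω → ℝ) (R : Fin n → Ω → ℝ)
    (hV : Measurable V) (hVpos : ∀ᵐ ω ∂μ, 0 < V ω)
    (hR : ∀ i, Measurable (R i))
    (hindep : iIndepFun
      (fun o : Option (Fin n) => Option.elim o V (fun i => R i)) μ)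
    (hexp : ∀ i, Measure.map (R i) μ = expMeasure 1)
    (φinv φ : ℝ → ℝ)
    (hLS : ∀ s, 0 ≤ s → φinv s = ∫ ω, Real.exp (-s * V ω) ∂μ)
    (hφ_nonneg : ∀ u ∈ Ioc (0:ℝ) 1, 0 ≤ φ u)
    (hφ : ∀ u ∈ Ioc (0:ℝ) 1, φinv (φ u) = u) :
    (∀ u : Fin n → ℝ, (∀ i, u i ∈ Ioc (0:ℝ) 1) →
      μ {ω | ∀ i, φinv (R i ω / V ω) ≤ u i} =
        ENNReal.ofReal (φinv (∑ i, φ (u i)))) ∧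
    (∀ i : Fin n, ∀ u ∈ Ioc (0:ℝ) 1,
      μ {ω | φinv (R i ω / V ω) ≤ u} = ENNReal.ofReal u) := by
  have hφinv_eq_mgf : ∀ s, 0 ≤ s → φinv s = mgf V μ (-s) := hLS
  have hanti : StrictAntiOn φinv (Ici 0) := fun a ha b hb hab ↦ by
    rw [hφinv_eq_mgf a ha, hφinv_eq_mgf b hb]
    exact mgf_strictMonoOn_Iic hV.aemeasurable hVpos (neg_nonpos.2 (mem_Ici.1 hb))
      (neg_nonpos.2 (mem_Ici.1 ha)) (neg_lt_neg hab)
  have hR₀ : ∀ i, ∀ᵐ ω ∂μ, 0 ≤ R i ω := fun i ↦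
    ae_of_ae_map (hR i).aemeasurable (hexp i ▸ ae_nonneg_expMeasure one_pos)
  have hU : ∀ i, ∀ u ∈ Ioc (0 : ℝ) 1, ∀ᵐ ω ∂μ, φinv (R i ω / V ω) ≤ u ↔ φ u * V ω ≤ R i ω := by
    intro i u hu
    filter_upwards [hVpos, hR₀ i] with ω hVω hRω
    rw [← le_div_iff₀ hVω, ← hanti.le_iff_ge (div_nonneg hRω hVω.le) (hφ_nonneg u hu), hφ u hu]
  have hjoint : ∀ c : Fin n → ℝ, 0 ≤ c →
      μ {ω | ∀ i, c i * V ω ≤ R i ω} = ENNReal.ofReal (φinv (∑ i, c i)) := fun c hc ↦ by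
    rw [measure_forall_mul_le_eq_mgf hV.aemeasurable (fun i ↦ (hR i).aemeasurable)
      (hVpos.mono fun _ h ↦ h.le) hindep one_pos hexp hc, one_mul,
      hφinv_eq_mgf _ (Finset.sum_nonneg fun i _ ↦ hc i)]
  refine ⟨fun u hu ↦ ?_, fun i u hu ↦ ?_⟩
  · rw [← hjoint _ fun i ↦ hφ_nonneg _ (hu i)]
    refine measure_congr (Filter.eventuallyEq_set.2 ?_)
    filter_upwards [ae_all_iff.2 fun i ↦ hU i (u i) (hu i)] with ω hω using forall_congr' hω
  · have hmarg := hjoint (Pi.single i (φ u)) (Pi.single_nonneg.2 (hφ_nonneg u hu))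
    rw [Finset.sum_pi_single', if_pos (Finset.mem_univ i), hφ u hu] at hmarg
    rw [← hmarg]
    refine measure_congr (Filter.eventuallyEq_set.2 ?_)
    filter_upwards [hU i u hu, ae_all_iff.2 hR₀] with ω hω hRω
    rw [hω, forall_pi_single_mul_le_iff hRω]
end

section
/- Let f_V be a density on (0,∞) that is eventually monotone with survival function F̄_V ∈ RV_{−1/α}, α>1 (so f_V ∈ RV_{−1/α−1}). Fix x_0 > 0 and q_n ∈ (0,1) with q_n → 0, and define the twisted density f*_V(x) = f_V(x) for x < x_0, and f*_V(x) = F̄_V(x_0) x_0^{−λ_n} λ_n x^{λ_n − 1} for x ≥ x_0, where λ_n = 1/log φ(1−f_n) < 0 with log φ(1−f_n) → −∞. Then for all sufficiently large n there is a constant C (independent of n and x) such that f_V(x)/f*_V(x) ≤ C(−log φ(1−f_n)) for all x > 0. -/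
open Filter Set MeasureTheory

/-- A positive function is regularly varying at infinity with index `ρ`. -/
def RegularlyVarying (g : ℝ → ℝ) (ρ : ℝ) : Prop :=
  ∀ x > (0 : ℝ), Tendsto (fun t => g (t * x) / g t) atTop (nhds (x ^ ρ))

/-- likelihood ratio bound for the hazard-rate-twisted density: pasting a
Pareto-type tail with shape `-1/log φ(1 - f n)` onto the eventually monotone regularly
varying density `fV` beyond `x0`, the likelihood ratio `fV / fV*` is bounded by
`C (-log φ(1 - f n))` for all sufficiently large `n`, with `C` independent of `n, x`. -/
theorem stmt16 (α : ℝ) (hα : 1 < α)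
    (fV : ℝ → ℝ) (hfV_pos : ∀ x > (0:ℝ), 0 < fV x)
    (hfV_RV : RegularlyVarying fV (-(1 / α) - 1))
    (x1 : ℝ) (hmono : AntitoneOn fV (Ici x1))
    (Fbar : ℝ → ℝ) (hFbar : ∀ x, Fbar x = ∫ t in Ioi x, fV t)
    (hFbar_RV : RegularlyVarying Fbar (-(1 / α)))
    (x0 : ℝ) (hx0 : 0 < x0) (hFx0 : 0 < Fbar x0)
    (hPotter : ∃ C0 > (0:ℝ), ∃ ε > (0:ℝ), ε < 1 / α ∧
      ∀ x ≥ x0, fV x ≤ C0 * x ^ (-(1 / α) - 1 + ε))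
    (φ : ℝ → ℝ) (f : ℕ → ℝ) (hf : ∀ n, 0 < f n ∧ f n < 1)
    (hf0 : Tendsto f atTop (nhds 0))
    (hφpos : ∀ n, 0 < φ (1 - f n))
    (hlog : Tendsto (fun n => Real.log (φ (1 - f n))) atTop atBot) :
    ∃ C > (0:ℝ), ∀ᶠ n : ℕ in atTop, ∀ x > (0:ℝ),
      fV x /
        (if x < x0 then fV x
         else Fbar x0 * x0 ^ (-(1 / Real.log (φ (1 - f n)))) *
            (-(1 / Real.log (φ (1 - f n)))) * x ^ (1 / Real.log (φ (1 - f n)) - 1)) ≤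
      C * (-Real.log (φ (1 - f n))) := by

  obtain ⟨C0, hC0, ε, hε, hεα, hP⟩ := hPotter
  have hαε : 0 < 1 / α - ε := sub_pos.mpr hεα
  set C : ℝ := max 1 (C0 * x0 ^ (-(1 / α) + ε) / Fbar x0) with hC
  have hC1 : (1 : ℝ) ≤ C := le_max_left _ _
  have hCpos : 0 < C := lt_of_lt_of_le one_pos hC1
  refine ⟨C, hCpos, ?_⟩
  have hev : ∀ᶠ n : ℕ in atTop,
      Real.log (φ (1 - f n)) ≤ min (-1) (-(1 / α - ε)⁻¹) :=
    hlog.eventually (eventually_le_atBot _)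
  filter_upwards [hev] with n hn x hx
  set L := Real.log (φ (1 - f n)) with hLdef
  have hL1 : L ≤ -1 := le_trans hn (min_le_left _ _)
  have hL2 : L ≤ -(1 / α - ε)⁻¹ := le_trans hn (min_le_right _ _)
  have hLneg : L < 0 := lt_of_le_of_lt hL1 (by norm_num)
  have hLne : L ≠ 0 := ne_of_lt hLneg
  have hnegL : (1 : ℝ) ≤ -L := by linarith
  have hlam : -(1 / L) ≤ 1 / α - ε := by
    have h1 : (1 / α - ε)⁻¹ ≤ -L := by linarith
    calc -(1 / L) = (-L)⁻¹ := by ring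
    _ ≤ ((1 / α - ε)⁻¹)⁻¹ := inv_anti₀ (inv_pos.mpr hαε) h1
    _ = 1 / α - ε := inv_inv _
  have hlp : 0 < -(1 / L) := by
    rw [(by ring : -(1 / L) = 1 / (-L))]
    positivity
  by_cases hxx : x < x0
  · simp only [if_pos hxx]
    rw [div_self (ne_of_gt (hfV_pos x hx))]
    calc (1 : ℝ) = 1 * 1 := by ring
    _ ≤ C * (-L) := mul_le_mul hC1 hnegL one_pos.le hCpos.le
  · simp only [if_neg hxx]
    have hxge : x0 ≤ x := not_lt.mp hxx
    have hD : 0 < Fbar x0 * x0 ^ (-(1 / L)) * (-(1 / L)) * x ^ (1 / L - 1) :=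
      mul_pos (mul_pos (mul_pos hFx0 (Real.rpow_pos_of_pos hx0 _)) hlp)
        (Real.rpow_pos_of_pos hx _)
    rw [div_le_iff₀ hD]
    have hsplit : x ^ (-(1 / α) - 1 + ε)
        = x ^ (-(1 / α) + ε - 1 / L) * x ^ (1 / L - 1) := by
      rw [← Real.rpow_add hx]; congr 1; ring
    have hmonx : x ^ (-(1 / α) + ε - 1 / L) ≤ x0 ^ (-(1 / α) + ε - 1 / L) :=
      Real.rpow_le_rpow_of_nonpos hx0 hxge (by linarith)
    have hsplit0 : x0 ^ (-(1 / α) + ε - 1 / L)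
        = x0 ^ (-(1 / α) + ε) * x0 ^ (-(1 / L)) := by
      rw [← Real.rpow_add hx0]; ring_nf
    have hCkey : C0 * x0 ^ (-(1 / α) + ε) ≤ C * Fbar x0 := by
      have h3 : C0 * x0 ^ (-(1 / α) + ε) / Fbar x0 ≤ C := le_max_right _ _
      rw [div_le_iff₀ hFx0] at h3
      linarith
    calc fV x ≤ C0 * x ^ (-(1 / α) - 1 + ε) := hP x hxge
    _ = C0 * x ^ (-(1 / α) + ε - 1 / L) * x ^ (1 / L - 1) := by rw [hsplit]; ring
    _ ≤ C0 * x0 ^ (-(1 / α) + ε - 1 / L) * x ^ (1 / L - 1) :=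
        mul_le_mul_of_nonneg_right (mul_le_mul_of_nonneg_left hmonx hC0.le)
          (Real.rpow_pos_of_pos hx _).le
    _ = (C0 * x0 ^ (-(1 / α) + ε)) * (x0 ^ (-(1 / L)) * x ^ (1 / L - 1)) := by
        rw [hsplit0]; ring
    _ ≤ (C * Fbar x0) * (x0 ^ (-(1 / L)) * x ^ (1 / L - 1)) :=
        mul_le_mul_of_nonneg_right hCkey
          (mul_pos (Real.rpow_pos_of_pos hx0 _) (Real.rpow_pos_of_pos hx _)).le
    _ = C * (-L) * (Fbar x0 * x0 ^ (-(1 / L)) * (-(1 / L)) * x ^ (1 / L - 1)) := by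
        field_simp
end
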